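/- arXiv:2508.10705 — 3 statements merged into one kernel-verified Lean document; each statement's English description precedes it below -/
import Mathlib

section
/- Let d, m ∈ ℕ, T > 0, and λ : [0,T] → ℝ be measurable with λ(t) ≥ 0. Let p₀ : ℝ^d × ℝ^m → ℝ be a measurable, strictly positive joint probability density (with respect to Lebesgue measure) of a pair (X₀, Y). For each t ∈ (0,T] let k_t : ℝ^d × ℝ^d → ℝ be a measurable, strictly positive transition density (for each x₀, x ↦ k_t(x,x₀) is a probability density), differentiable in its first argument, and define p_t(x,y) = ∫_{ℝ^d} k_t(x,x₀) p₀(x₀,y) dx₀; assume differentiation under the integral sign is valid, i.e. ∇_x p_t(x,y) = ∫ ∇_x k_t(x,x₀) p₀(x₀,y) dx₀ for all (x,y), and that all integrals below are finite. For a measurable function s : ℝ^d × ℝ^m × [0,T] → ℝ^d define the conditional score-matching loss L_CDE(s) = ∫_0^T λ(t) ∭ ‖∇_x log p_t(x,y) − s(x,y,t)‖² k_t(x,x₀) p₀(x₀,y) dx₀ dx dy dt and the denoising loss L_DSM(s) = ∫_0^T λ(t) ∭ ‖∇_x log k_t(x,x₀) − s(x,y,t)‖² k_t(x,x₀) p₀(x₀,y)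 dx₀ dx dy dt. Then the difference L_CDE(s) − L_DSM(s) is independent of s; in particular L_CDE(s) − L_DSM(s) = L_CDE(0) − L_DSM(0) for every such s with finite losses. -/
/-!
Expanding both squares, `L_CDE(s) - L_DSM(s)` differs from `L_CDE(0) - L_DSM(0)` only by the
cross term `2 ∫ λ ∭ ⟪∇ log k_t - ∇ log p_t, s⟫ k_t p₀`. For fixed `(t, y, x)` the `x₀`-integral
of `k_t p₀ ∇ log k_t = p₀ ∇ k_t` is `∇ p_t = p_t ∇ log p_t = (∫ k_t p₀) ∇ log p_t`, so
`∇ log p_t(x, y)` is the `k_t p₀`-barycenter of `∇ log k_t(x, ·)` and the cross term vanishes.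
Since `p_t` is not assumed differentiable, `p_t ∇ log p_t = ∇ p_t` holds only for almost every
`x`, which is all the `x`-integral needs.
-/

open MeasureTheory

noncomputable section

/-- Iterated integrability over `(0,T] × ℝ^m × ℝ^d × ℝ^d` of a time-indexed,
`λ`-weighted integrand, expressing that "all integrals below are finite". -/
def IterIntegrable (d m : ℕ) (T : ℝ) (lam : ℝ → ℝ)
    (F : ℝ → EuclideanSpace ℝ (Fin m) → EuclideanSpace ℝ (Fin d) →
      EuclideanSpace ℝ (Fin d) → ℝ) : Prop :=
  (∀ t ∈ Set.Ioc (0:ℝ) T, ∀ y x, Integrable (fun x0 => F t y x x0)) ∧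
  (∀ t ∈ Set.Ioc (0:ℝ) T, ∀ y, Integrable (fun x => ∫ x0, F t y x x0)) ∧
  (∀ t ∈ Set.Ioc (0:ℝ) T, Integrable (fun y => ∫ x, ∫ x0, F t y x x0)) ∧
  IntegrableOn (fun t => lam t * ∫ y, ∫ x, ∫ x0, F t y x x0) (Set.Ioc 0 T)

/-- The `λ`-weighted loss `∫_0^T λ(t) ∭ F(t,y,x,x₀) dx₀ dx dy dt`. -/
def weightedLoss (d m : ℕ) (T : ℝ) (lam : ℝ → ℝ)
    (F : ℝ → EuclideanSpace ℝ (Fin m) → EuclideanSpace ℝ (Fin d) →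
      EuclideanSpace ℝ (Fin d) → ℝ) : ℝ :=
  ∫ t in Set.Ioc (0:ℝ) T, lam t * ∫ y, ∫ x, ∫ x0, F t y x x0

/-- The integrand of the conditional score-matching loss `L_CDE`:
`‖∇_x log p_t(x,y) − s(x,y,t)‖² k_t(x,x₀) p₀(x₀,y)`. -/
def cdeIntegrand (d m : ℕ)
    (p : ℝ → EuclideanSpace ℝ (Fin d) → EuclideanSpace ℝ (Fin m) → ℝ)
    (k : ℝ → EuclideanSpace ℝ (Fin d) → EuclideanSpace ℝ (Fin d) → ℝ)
    (p0 : EuclideanSpace ℝ (Fin d) → EuclideanSpace ℝ (Fin m) → ℝ)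
    (s : EuclideanSpace ℝ (Fin d) → EuclideanSpace ℝ (Fin m) → ℝ →
      EuclideanSpace ℝ (Fin d))
    (t : ℝ) (y : EuclideanSpace ℝ (Fin m)) (x x0 : EuclideanSpace ℝ (Fin d)) : ℝ :=
  ‖gradient (fun x' => Real.log (p t x' y)) x - s x y t‖ ^ 2 * (k t x x0 * p0 x0 y)

/-- The integrand of the denoising score-matching loss `L_DSM`:
`‖∇_x log k_t(x,x₀) − s(x,y,t)‖² k_t(x,x₀) p₀(x₀,y)`. -/
def dsmIntegrand (d m : ℕ)
    (k : ℝ → EuclideanSpace ℝ (Fin d) → EuclideanSpace ℝ (Fin d) → ℝ)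
    (p0 : EuclideanSpace ℝ (Fin d) → EuclideanSpace ℝ (Fin m) → ℝ)
    (s : EuclideanSpace ℝ (Fin d) → EuclideanSpace ℝ (Fin m) → ℝ →
      EuclideanSpace ℝ (Fin d))
    (t : ℝ) (y : EuclideanSpace ℝ (Fin m)) (x x0 : EuclideanSpace ℝ (Fin d)) : ℝ :=
  ‖gradient (fun x' => Real.log (k t x' x0)) x - s x y t‖ ^ 2 * (k t x x0 * p0 x0 y)

open Filter Topology Set Metric

section LevelSet

variable {E F : Type*} [NormedAddCommGroup E] [NormedSpace ℝ E]

theorem smul_fderiv_log {u : E → ℝ} {x : E} (hu : DifferentiableAt ℝ u x) (hx : u x ≠ 0) :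
    u x • fderiv ℝ (fun x' => Real.log (u x')) x = fderiv ℝ u x := by
  rw [(hu.hasFDerivAt.log hx).fderiv, smul_smul, mul_inv_cancel₀ hx, one_smul]

variable [FiniteDimensional ℝ E] [MeasurableSpace E] [BorelSpace E] (μ : Measure E)
  [μ.IsAddHaarMeasure] [NormedAddCommGroup F] [NormedSpace ℝ F]

/-- If `D = fderiv ℝ f x ≠ 0` at a density point `x` of `s`, then `s` meets the translated cone
`x + {h | ‖D‖/2 ‖h‖ < ‖D h‖}` arbitrarily close to `x`, where `f` cannot equal `f x`. -/
theorem ae_fderiv_eq_zero_of_forall_mem_eq {f : E → F} {s : Set E} {c : F}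
    (hs : MeasurableSet s) (hf : ∀ x ∈ s, f x = c) :
    ∀ᵐ x ∂μ, x ∈ s → fderiv ℝ f x = 0 := by
  filter_upwards [Besicovitch.ae_tendsto_measure_inter_div_of_measurableSet μ hs]
    with x hdensity hxs
  rw [indicator_of_mem hxs, Pi.one_apply] at hdensity
  by_cases hdiff : DifferentiableAt ℝ f x
  swap
  · exact fderiv_zero_of_not_differentiableAt hdiff
  by_contra hD
  set D := fderiv ℝ f x
  set ε := ‖D‖ / 2
  let cone : Set E := {h | ε * ‖h‖ < ‖D h‖} ∩ ball 0 1
  have hcone_open : IsOpen cone :=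
    (isOpen_lt (continuous_const.mul continuous_norm) D.continuous.norm).inter isOpen_ball
  obtain ⟨h₀, hh₀, hDh₀⟩ := D.exists_lt_apply_of_lt_opNorm (half_lt_self (norm_pos_iff.2 hD))
  have hcone_pos : μ cone ≠ 0 := (hcone_open.measure_pos μ
    ⟨h₀, (mul_le_of_le_one_right (by positivity) hh₀.le).trans_lt hDh₀, by simpa using hh₀⟩).ne'
  obtain ⟨δ, hδ, hball⟩ := Metric.mem_nhds_iff.1
    (hdiff.hasFDerivAt.isLittleO.def (half_pos (norm_pos_iff.2 hD)))
  obtain ⟨r, ⟨z, hzs, hz⟩, hr⟩ := ((Measure.eventually_nonempty_inter_smul_of_density_one μ s x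
    hdensity cone hcone_open.measurableSet hcone_pos).and (Ioo_mem_nhdsGT hδ)).exists
  rw [singleton_add] at hz
  obtain ⟨_, ⟨h, ⟨hh, hh1⟩, rfl⟩, rfl⟩ := hz
  have hr0 : 0 < r := hr.1
  have hnear : x + r • h ∈ ball x δ := by
    rw [mem_ball, dist_self_add_left, norm_smul, Real.norm_of_nonneg hr0.le]
    rw [mem_ball_zero_iff] at hh1
    nlinarith [hr.2]
  have hsmall : ‖f (x + r • h) - f x - D (x + r • h - x)‖ ≤ ε * ‖x + r • h - x‖ := hball hnear
  rw [hf _ hzs, hf x hxs, sub_self, zero_sub, norm_neg, add_sub_cancel_left] at hsmall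
  have hlarge : ε * ‖r • h‖ < ‖D (r • h)‖ := by
    rw [map_smul, norm_smul, norm_smul, mul_left_comm]
    exact mul_lt_mul_of_pos_left hh (norm_pos_iff.2 hr0.ne')
  exact hsmall.not_gt hlarge

/-- Where `u` is not differentiable but `log ∘ u` is, `u` must vanish at points accumulating
at `x` (otherwise `u = exp ∘ log ∘ u` near `x`), so `log (u x) = 0`, i.e. `x` lies on the level
set `{u = 1}`, on which `log ∘ u` vanishes; such points are negligible. -/
theorem ae_smul_fderiv_log_eq_fderiv {u : E → ℝ} (hu : Measurable u) (hu0 : ∀ x, 0 ≤ u x) :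
    ∀ᵐ x ∂μ, 0 < u x → u x • fderiv ℝ (fun x' => Real.log (u x')) x = fderiv ℝ u x := by
  have hlevel : ∀ x ∈ u ⁻¹' {1}, Real.log (u x) = 0 := fun x hx => by
    rw [mem_preimage, mem_singleton_iff] at hx
    rw [hx, Real.log_one]
  filter_upwards [ae_fderiv_eq_zero_of_forall_mem_eq μ (hu (measurableSet_singleton 1)) hlevel]
    with x hflat hx
  by_cases hdu : DifferentiableAt ℝ u x
  · exact smul_fderiv_log hdu hx.ne'
  by_cases hdv : DifferentiableAt ℝ (fun x' => Real.log (u x')) x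
  swap
  · rw [fderiv_zero_of_not_differentiableAt hdu, fderiv_zero_of_not_differentiableAt hdv,
      smul_zero]
  have hlog : Real.log (u x) = 0 := by
    by_contra hne
    refine hdu (hdv.exp.congr_of_eventuallyEq ?_)
    filter_upwards [hdv.continuousAt.eventually_ne hne] with x' hx'
    exact (Real.exp_log ((hu0 x').lt_of_ne (fun h => hx' (by rw [← h, Real.log_zero])))).symm
  have hx1 : u x = 1 := by
    rcases Real.log_eq_zero.1 hlog with h | h | h
    · exact absurd h hx.ne'
    · exact h
    · linarith
  rw [hflat hx1, fderiv_zero_of_not_differentiableAt hdu, smul_zero]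

end LevelSet

section ParametricDerivative

variable {α : Type*} [MeasurableSpace α]

theorem measurable_fderiv_apply_of_differentiableAt {E F : Type*} [NormedAddCommGroup E]
    [NormedSpace ℝ E] [MeasurableSpace E] [NormedAddCommGroup F] [NormedSpace ℝ F]
    [MeasurableSpace F] [BorelSpace F] [SecondCountableTopology F] {f : E → α → F}
    (hf : Measurable (Function.uncurry f)) {x : E}
    (hd : ∀ a, DifferentiableAt ℝ (fun x' => f x' a) x) (v : E) :
    Measurable fun a => fderiv ℝ (fun x' => f x' a) x v := by
  refine measurable_of_tendsto_metrizable (f := fun (n : ℕ) a =>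
    (n : ℝ) • (f (x + (n : ℝ)⁻¹ • v) a - f x a)) (fun n => ?_) (tendsto_pi_nhds.2 fun a => ?_)
  · exact ((hf.comp measurable_prodMk_left).sub (hf.comp measurable_prodMk_left)).const_smul _
  · exact (hd a).hasFDerivAt.lim v (tendsto_norm_atTop_atTop.comp tendsto_natCast_atTop_atTop)

theorem measurable_gradient_of_differentiableAt {E : Type*} [NormedAddCommGroup E]
    [InnerProductSpace ℝ E] [FiniteDimensional ℝ E] [MeasurableSpace E] [BorelSpace E]
    {f : E → α → ℝ} (hf : Measurable (Function.uncurry f)) {x : E}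
    (hd : ∀ a, DifferentiableAt ℝ (fun x' => f x' a) x) :
    Measurable fun a => gradient (fun x' => f x' a) x := by
  let b := stdOrthonormalBasis ℝ E
  have hexpand : ∀ a, gradient (fun x' => f x' a) x =
      ∑ i, fderiv ℝ (fun x' => f x' a) x (b i) • b i := fun a => by
    conv_lhs => rw [← b.sum_repr' (gradient (fun x' => f x' a) x)]
    refine Finset.sum_congr rfl fun i _ => ?_
    rw [real_inner_comm, gradient, InnerProductSpace.toDual_symm_apply]
  simp_rw [hexpand]
  exact Finset.measurable_sum _ fun i _ =>
    (measurable_fderiv_apply_of_differentiableAt hf hd (b i)).smul_const _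

end ParametricDerivative

section WeightedSquares

variable {α E : Type*} [MeasurableSpace α] {μ : Measure α}
  [NormedAddCommGroup E] {w : α → ℝ} {b : α → E}

theorem integrable_of_integrable_norm_sq_mul_of_integrable_norm_sub_sq_mul
    (hw : AEStronglyMeasurable w μ) (hw0 : ∀ z, 0 ≤ w z) {c : E} (hc : c ≠ 0)
    (hb : Integrable (fun z => ‖b z‖ ^ 2 * w z) μ)
    (hbc : Integrable (fun z => ‖b z - c‖ ^ 2 * w z) μ) :
    Integrable w μ := by
  have hc2 : 0 < ‖c‖ ^ 2 := by positivity
  refine Integrable.mono' ((hb.add hbc).const_mul (2 / ‖c‖ ^ 2)) hw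
    (Eventually.of_forall fun z => ?_)
  have htri : ‖c‖ ≤ ‖b z‖ + ‖b z - c‖ := by
    simpa using norm_sub_le (b z) (b z - c)
  have hsq : ‖c‖ ^ 2 ≤ 2 * (‖b z‖ ^ 2 + ‖b z - c‖ ^ 2) := by
    nlinarith [two_mul_le_add_sq ‖b z‖ ‖b z - c‖, norm_nonneg c]
  rw [Pi.add_apply, Real.norm_of_nonneg (hw0 z), div_mul_eq_mul_div, le_div_iff₀ hc2]
  nlinarith [mul_le_mul_of_nonneg_left hsq (hw0 z)]

variable [InnerProductSpace ℝ E]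

theorem MeasureTheory.Integrable.smul_of_integrable_norm_sq_mul (hw : Integrable w μ)
    (hw0 : ∀ z, 0 ≤ w z) (hbm : AEStronglyMeasurable b μ)
    (hb : Integrable (fun z => ‖b z‖ ^ 2 * w z) μ) :
    Integrable (fun z => w z • b z) μ := by
  refine Integrable.mono' ((hb.add hw).const_mul (1 / 2)) (hw.1.smul hbm)
    (Eventually.of_forall fun z => ?_)
  rw [Pi.add_apply, norm_smul, Real.norm_of_nonneg (hw0 z)]
  nlinarith [mul_le_mul_of_nonneg_left (two_mul_le_add_sq ‖b z‖ 1) (hw0 z)]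

variable [CompleteSpace E]

theorem integral_norm_sub_sq_mul (hw : Integrable w μ) (hwb : Integrable (fun z => w z • b z) μ)
    (hb : Integrable (fun z => ‖b z‖ ^ 2 * w z) μ) (c : E) :
    ∫ z, ‖b z - c‖ ^ 2 * w z ∂μ =
      (∫ z, ‖b z‖ ^ 2 * w z ∂μ) - 2 * inner ℝ (∫ z, w z • b z ∂μ) c + ‖c‖ ^ 2 * ∫ z, w z ∂μ := by
  have hexpand : ∀ z, ‖b z - c‖ ^ 2 * w z =
      ‖b z‖ ^ 2 * w z - 2 * inner ℝ c (w z • b z) + ‖c‖ ^ 2 * w z := fun z => by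
    rw [norm_sub_sq_real, inner_smul_right, real_inner_comm]
    ring
  simp_rw [hexpand]
  have hcross : Integrable (fun z => 2 * inner ℝ c (w z • b z)) μ :=
    (hwb.const_inner c).const_mul 2
  rw [integral_add (f := fun z => ‖b z‖ ^ 2 * w z - 2 * inner ℝ c (w z • b z)) (hb.sub hcross)
      (hw.const_mul _), integral_sub hb hcross, integral_const_mul, integral_const_mul,
    integral_inner hwb, real_inner_comm]

theorem integral_norm_sub_sq_mul_sub_of_barycenter (hw : Integrable w μ)
    (hwb : Integrable (fun z => w z • b z) μ) (hb : Integrable (fun z => ‖b z‖ ^ 2 * w z) μ)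
    {a : E} (hbar : (∫ z, w z ∂μ) • a = ∫ z, w z • b z ∂μ) (c : E) :
    (∫ z, ‖a - c‖ ^ 2 * w z ∂μ) - ∫ z, ‖b z - c‖ ^ 2 * w z ∂μ =
      (∫ z, ‖a‖ ^ 2 * w z ∂μ) - ∫ z, ‖b z‖ ^ 2 * w z ∂μ := by
  have hconst := integral_norm_sub_sq_mul (b := fun _ => a) hw (hw.smul_const a)
    (hw.const_mul _) c
  rw [integral_smul_const, hbar] at hconst
  rw [hconst, integral_norm_sub_sq_mul hw hwb hb c]
  ring

end WeightedSquares

section Mixture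

variable {E β : Type*} [NormedAddCommGroup E] [InnerProductSpace ℝ E] [FiniteDimensional ℝ E]

theorem smul_gradient_eq_of_smul_fderiv_eq {u v : E → ℝ} {x : E} {r : ℝ}
    (h : r • fderiv ℝ v x = fderiv ℝ u x) : r • gradient v x = gradient u x := by
  rw [gradient, gradient, ← h, map_smul]

variable [MeasurableSpace E] [BorelSpace E] (μ : Measure E)
  [μ.IsAddHaarMeasure] [MeasurableSpace β] {ν : Measure β} [SFinite ν] [NeZero ν]

theorem ae_integral_mixture_score_sub_kernel_score_eq {K : E → β → ℝ} {q : β → ℝ} {P : E → ℝ}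
    (hK : Measurable (Function.uncurry K)) (hK_pos : ∀ x x₀, 0 < K x x₀)
    (hK_diff : ∀ x₀, Differentiable ℝ fun x => K x x₀)
    (hq : Measurable q) (hq_pos : ∀ x₀, 0 < q x₀)
    (hP : ∀ x, P x = ∫ x₀, K x x₀ * q x₀ ∂ν)
    (hP_grad : ∀ x, gradient P x = ∫ x₀, q x₀ • gradient (fun x' => K x' x₀) x ∂ν)
    (s : E → E)
    (hb : ∀ x, Integrable (fun x₀ =>
      ‖gradient (fun x' => Real.log (K x' x₀)) x‖ ^ 2 * (K x x₀ * q x₀)) ν)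
    (hbs : ∀ x, Integrable (fun x₀ =>
      ‖gradient (fun x' => Real.log (K x' x₀)) x - s x‖ ^ 2 * (K x x₀ * q x₀)) ν) :
    ∀ᵐ x ∂μ,
      (∫ x₀, ‖gradient (fun x' => Real.log (P x')) x - s x‖ ^ 2 * (K x x₀ * q x₀) ∂ν) -
          ∫ x₀, ‖gradient (fun x' => Real.log (K x' x₀)) x - s x‖ ^ 2 * (K x x₀ * q x₀) ∂ν =
        (∫ x₀, ‖gradient (fun x' => Real.log (P x')) x‖ ^ 2 * (K x x₀ * q x₀) ∂ν) -
          ∫ x₀, ‖gradient (fun x' => Real.log (K x' x₀)) x‖ ^ 2 * (K x x₀ * q x₀) ∂ν := by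
  have hP_meas : Measurable P := by
    rw [funext hP]
    exact ((hK.mul (hq.comp measurable_snd)).stronglyMeasurable.integral_prod_right').measurable
  have hw0 : ∀ x x₀, 0 ≤ K x x₀ * q x₀ := fun x x₀ => (mul_pos (hK_pos x x₀) (hq_pos x₀)).le
  have hP0 : ∀ x, 0 ≤ P x := fun x => (hP x).symm ▸ integral_nonneg (hw0 x)
  filter_upwards [ae_smul_fderiv_log_eq_fderiv μ hP_meas hP0] with x hscore
  rcases eq_or_ne (s x) 0 with hs0 | hs0
  · simp only [hs0, sub_zero]
  have hw : Integrable (fun x₀ => K x x₀ * q x₀) ν :=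
    integrable_of_integrable_norm_sq_mul_of_integrable_norm_sub_sq_mul
      ((hK.comp measurable_prodMk_left).mul hq).aestronglyMeasurable (hw0 x) hs0 (hb x) (hbs x)
  have hb_meas : Measurable fun x₀ => gradient (fun x' => Real.log (K x' x₀)) x :=
    measurable_gradient_of_differentiableAt (f := fun x' x₀ => Real.log (K x' x₀)) hK.log
      fun x₀ => (hK_diff x₀ x).log (hK_pos x x₀).ne'
  have hP_pos : 0 < P x := by
    rw [hP x, integral_pos_iff_support_of_nonneg (hw0 x) hw,
      Function.support_eq_univ fun x₀ => (mul_pos (hK_pos x x₀) (hq_pos x₀)).ne']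
    exact Measure.measure_univ_pos.2 (NeZero.ne ν)
  have hbar : (∫ x₀, K x x₀ * q x₀ ∂ν) • gradient (fun x' => Real.log (P x')) x =
      ∫ x₀, (K x x₀ * q x₀) • gradient (fun x' => Real.log (K x' x₀)) x ∂ν := by
    rw [← hP x, smul_gradient_eq_of_smul_fderiv_eq (hscore hP_pos), hP_grad x]
    congr 1 with x₀
    rw [mul_comm, mul_smul, smul_gradient_eq_of_smul_fderiv_eq
      (smul_fderiv_log (hK_diff x₀ x) (hK_pos x x₀).ne')]
  exact integral_norm_sub_sq_mul_sub_of_barycenter hw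
    (hw.smul_of_integrable_norm_sq_mul (hw0 x) hb_meas.aestronglyMeasurable (hb x)) (hb x) hbar
    (s x)

end Mixture

theorem integral_sub_eq_integral_sub_of_ae_eq {α E : Type*} [MeasurableSpace α] {μ : Measure α}
    [NormedAddCommGroup E] [NormedSpace ℝ E] {f₁ f₂ g₁ g₂ : α → E}
    (hf₁ : Integrable f₁ μ) (hf₂ : Integrable f₂ μ) (hg₁ : Integrable g₁ μ) (hg₂ : Integrable g₂ μ)
    (h : ∀ᵐ z ∂μ, f₁ z - f₂ z = g₁ z - g₂ z) :
    (∫ z, f₁ z ∂μ) - ∫ z, f₂ z ∂μ = (∫ z, g₁ z ∂μ) - ∫ z, g₂ z ∂μ := by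
  rw [← integral_sub hf₁ hf₂, ← integral_sub hg₁ hg₂]
  exact integral_congr_ae h

theorem weightedLoss_sub_eq_of_ae_eq {d m : ℕ} {T : ℝ} {lam : ℝ → ℝ}
    {F₁ F₂ G₁ G₂ : ℝ → EuclideanSpace ℝ (Fin m) → EuclideanSpace ℝ (Fin d) →
      EuclideanSpace ℝ (Fin d) → ℝ}
    (hF₁ : IterIntegrable d m T lam F₁) (hF₂ : IterIntegrable d m T lam F₂)
    (hG₁ : IterIntegrable d m T lam G₁) (hG₂ : IterIntegrable d m T lam G₂)
    (h : ∀ t ∈ Ioc (0 : ℝ) T, ∀ y, ∀ᵐ x,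
      (∫ x₀, F₁ t y x x₀) - ∫ x₀, F₂ t y x x₀ = (∫ x₀, G₁ t y x x₀) - ∫ x₀, G₂ t y x x₀) :
    weightedLoss d m T lam F₁ - weightedLoss d m T lam F₂ =
      weightedLoss d m T lam G₁ - weightedLoss d m T lam G₂ := by
  obtain ⟨-, hF₁x, hF₁y, hF₁t⟩ := hF₁
  obtain ⟨-, hF₂x, hF₂y, hF₂t⟩ := hF₂
  obtain ⟨-, hG₁x, hG₁y, hG₁t⟩ := hG₁
  obtain ⟨-, hG₂x, hG₂y, hG₂t⟩ := hG₂
  have hx : ∀ t ∈ Ioc (0 : ℝ) T, ∀ y,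
      (∫ x, ∫ x₀, F₁ t y x x₀) - (∫ x, ∫ x₀, F₂ t y x x₀) =
        (∫ x, ∫ x₀, G₁ t y x x₀) - ∫ x, ∫ x₀, G₂ t y x x₀ := fun t ht y =>
    integral_sub_eq_integral_sub_of_ae_eq (hF₁x t ht y) (hF₂x t ht y) (hG₁x t ht y)
      (hG₂x t ht y) (h t ht y)
  have hy : ∀ t ∈ Ioc (0 : ℝ) T,
      (∫ y, ∫ x, ∫ x₀, F₁ t y x x₀) - (∫ y, ∫ x, ∫ x₀, F₂ t y x x₀) =
        (∫ y, ∫ x, ∫ x₀, G₁ t y x x₀) - ∫ y, ∫ x, ∫ x₀, G₂ t y x x₀ := fun t ht =>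
    integral_sub_eq_integral_sub_of_ae_eq (hF₁y t ht) (hF₂y t ht) (hG₁y t ht) (hG₂y t ht)
      (Eventually.of_forall (hx t ht))
  exact integral_sub_eq_integral_sub_of_ae_eq hF₁t hF₂t hG₁t hG₂t
    (ae_restrict_of_forall_mem measurableSet_Ioc fun t ht => by
      rw [← mul_sub, ← mul_sub, hy t ht])

theorem conditional_denoising_score_matching_equivalence_general
    (d m : ℕ) (T : ℝ)
    (lam : ℝ → ℝ)
    (p0 : EuclideanSpace ℝ (Fin d) → EuclideanSpace ℝ (Fin m) → ℝ)
    (hp0_meas : Measurable (Function.uncurry p0))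
    (hp0_pos : ∀ x0 y, 0 < p0 x0 y)
    (k : ℝ → EuclideanSpace ℝ (Fin d) → EuclideanSpace ℝ (Fin d) → ℝ)
    (hk_meas : ∀ t ∈ Set.Ioc (0:ℝ) T, Measurable (Function.uncurry (k t)))
    (hk_pos : ∀ t ∈ Set.Ioc (0:ℝ) T, ∀ x x0, 0 < k t x x0)
    (hk_diff : ∀ t ∈ Set.Ioc (0:ℝ) T, ∀ x0,
      Differentiable ℝ (fun x => k t x x0))
    (p : ℝ → EuclideanSpace ℝ (Fin d) → EuclideanSpace ℝ (Fin m) → ℝ)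
    (hp_def : ∀ t ∈ Set.Ioc (0:ℝ) T, ∀ x y, p t x y = ∫ x0, k t x x0 * p0 x0 y)
    (hp_grad : ∀ t ∈ Set.Ioc (0:ℝ) T, ∀ x y,
      gradient (fun x' => p t x' y) x =
        ∫ x0, p0 x0 y • gradient (fun x' => k t x' x0) x)
    (hzero_cde : IterIntegrable d m T lam
      (cdeIntegrand d m p k p0 (fun _ _ _ => 0)))
    (hzero_dsm : IterIntegrable d m T lam
      (dsmIntegrand d m k p0 (fun _ _ _ => 0))) :
    ∀ s : EuclideanSpace ℝ (Fin d) → EuclideanSpace ℝ (Fin m) → ℝ →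
        EuclideanSpace ℝ (Fin d),
      Measurable (fun q : EuclideanSpace ℝ (Fin d) × EuclideanSpace ℝ (Fin m) × ℝ =>
        s q.1 q.2.1 q.2.2) →
      IterIntegrable d m T lam (cdeIntegrand d m p k p0 s) →
      IterIntegrable d m T lam (dsmIntegrand d m k p0 s) →
      weightedLoss d m T lam (cdeIntegrand d m p k p0 s) -
          weightedLoss d m T lam (dsmIntegrand d m k p0 s) =
        weightedLoss d m T lam (cdeIntegrand d m p k p0 (fun _ _ _ => 0)) -
          weightedLoss d m T lam (dsmIntegrand d m k p0 (fun _ _ _ => 0)) := by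
  intro s _ hs_cde hs_dsm
  refine weightedLoss_sub_eq_of_ae_eq hs_cde hs_dsm hzero_cde hzero_dsm fun t ht y => ?_
  have hkernel_score_sq : ∀ x, Integrable fun x₀ =>
      ‖gradient (fun x' => Real.log (k t x' x₀)) x‖ ^ 2 * (k t x x₀ * p0 x₀ y) := fun x => by
    simpa only [dsmIntegrand, sub_zero] using hzero_dsm.1 t ht y x
  simpa only [cdeIntegrand, dsmIntegrand, sub_zero] using
    ae_integral_mixture_score_sub_kernel_score_eq volume (q := (p0 · y)) (hk_meas t ht)
      (hk_pos t ht) (hk_diff t ht) (hp0_meas.comp (measurable_id.prodMk measurable_const))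
      (hp0_pos · y)
      (hp_def t ht · y) (hp_grad t ht · y) (s · y t) hkernel_score_sq (hs_dsm.1 t ht y)

/-- **Theorem 1 (conditional denoising score matching).** Under the stated
assumptions on the joint density `p₀`, the transition densities `k_t`, the
perturbed densities `p_t(x,y) = ∫ k_t(x,x₀) p₀(x₀,y) dx₀`, and the validity of
differentiation under the integral sign, the difference `L_CDE(s) − L_DSM(s)`
is independent of `s`: for every measurable `s` with finite losses,
`L_CDE(s) − L_DSM(s) = L_CDE(0) − L_DSM(0)`. -/
theorem conditional_denoising_score_matching_equivalence
    (d m : ℕ) (T : ℝ) (hT : 0 < T)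
    (lam : ℝ → ℝ) (hlam_meas : Measurable lam)
    (hlam_nonneg : ∀ t ∈ Set.Icc (0:ℝ) T, 0 ≤ lam t)
    (p0 : EuclideanSpace ℝ (Fin d) → EuclideanSpace ℝ (Fin m) → ℝ)
    (hp0_meas : Measurable (Function.uncurry p0))
    (hp0_pos : ∀ x0 y, 0 < p0 x0 y)
    (hp0_prob : ∫ x0, ∫ y, p0 x0 y = 1)
    (k : ℝ → EuclideanSpace ℝ (Fin d) → EuclideanSpace ℝ (Fin d) → ℝ)
    (hk_meas : ∀ t ∈ Set.Ioc (0:ℝ) T, Measurable (Function.uncurry (k t)))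
    (hk_pos : ∀ t ∈ Set.Ioc (0:ℝ) T, ∀ x x0, 0 < k t x x0)
    (hk_prob : ∀ t ∈ Set.Ioc (0:ℝ) T, ∀ x0, ∫ x, k t x x0 = 1)
    (hk_diff : ∀ t ∈ Set.Ioc (0:ℝ) T, ∀ x0,
      Differentiable ℝ (fun x => k t x x0))
    (p : ℝ → EuclideanSpace ℝ (Fin d) → EuclideanSpace ℝ (Fin m) → ℝ)
    (hp_def : ∀ t ∈ Set.Ioc (0:ℝ) T, ∀ x y, p t x y = ∫ x0, k t x x0 * p0 x0 y)
    (hp_grad : ∀ t ∈ Set.Ioc (0:ℝ) T, ∀ x y,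
      gradient (fun x' => p t x' y) x =
        ∫ x0, p0 x0 y • gradient (fun x' => k t x' x0) x)
    (hzero_cde : IterIntegrable d m T lam
      (cdeIntegrand d m p k p0 (fun _ _ _ => 0)))
    (hzero_dsm : IterIntegrable d m T lam
      (dsmIntegrand d m k p0 (fun _ _ _ => 0))) :
    ∀ s : EuclideanSpace ℝ (Fin d) → EuclideanSpace ℝ (Fin m) → ℝ →
        EuclideanSpace ℝ (Fin d),
      Measurable (fun q : EuclideanSpace ℝ (Fin d) × EuclideanSpace ℝ (Fin m) × ℝ =>
        s q.1 q.2.1 q.2.2) →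
      IterIntegrable d m T lam (cdeIntegrand d m p k p0 s) →
      IterIntegrable d m T lam (dsmIntegrand d m k p0 s) →
      weightedLoss d m T lam (cdeIntegrand d m p k p0 s) -
          weightedLoss d m T lam (dsmIntegrand d m k p0 s) =
        weightedLoss d m T lam (cdeIntegrand d m p k p0 (fun _ _ _ => 0)) -
          weightedLoss d m T lam (dsmIntegrand d m k p0 (fun _ _ _ => 0)) :=
  conditional_denoising_score_matching_equivalence_general d m T lam p0 hp0_meas hp0_pos k hk_meas
    hk_pos hk_diff p hp_def hp_grad hzero_cde hzero_dsm

end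
end

section
/- Let d, m ∈ ℕ. Let p₀ : ℝ^d × ℝ^m → ℝ be a measurable, strictly positive joint probability density (with respect to Lebesgue measure), and let k : ℝ^d × ℝ^d → ℝ be a measurable, strictly positive transition density that is differentiable in its first argument, with p(x,y) = ∫_{ℝ^d} k(x,x₀) p₀(x₀,y) dx₀ and ∇_x p(x,y) = ∫ ∇_x k(x,x₀) p₀(x₀,y) dx₀ for all (x,y). Define s*(x,y) = ∇_x log p(x,y). Then for every measurable s : ℝ^d × ℝ^m → ℝ^d for which all integrals below are finite, the denoising loss satisfies the Pythagorean identity ∭ ‖∇_x log k(x,x₀) − s(x,y)‖² k(x,x₀) p₀(x₀,y) dx₀ dx dy = ∭ ‖∇_x log k(x,x₀) − s*(x,y)‖² k(x,x₀) p₀(x₀,y) dx₀ dx dy + ∬ ‖s*(x,y) − s(x,y)‖² p(x,y) dx dy; in particular s* minimizes the denoising loss over all such s. -/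
open MeasureTheory Metric Set Filter Topology Module Real
open scoped ENNReal Pointwise RealInnerProductSpace

/-!
Fix `y` and `x`, and put `w(x₀) = k(x,x₀) p₀(x₀,y)` and `g(x₀) = ∇ₓ log k(x,x₀)`. Since
`w g = p₀ ∇ₓk`, the hypothesis on `∇ₓp` reads `∫ w g = ∇ₓp(x,y)`, and `∇ₓp = p ∇ₓ log p = p s*`:
so `s*(x,y)` is the `w`-weighted mean of `g`, and the parallel axis theorem gives
`∫ ‖g - s‖² w = ∫ ‖g - s*‖² w + ‖s* - s‖² p` at `(x,y)`. Integrating over `x` and `y` finishes.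

As `p` need not be differentiable and `gradient` is `0` where the derivative does not exist, the
chain rule `∇p = p ∇ log p` is only available off the set where `log p` vanishes with nonzero
derivative. That set is Lebesgue-null: at each of its points a cone of directions leaves it,
so none of its points is a Lebesgue density point.
-/

theorem measure_eq_zero_of_forall_not_tendsto_density {β : Type*} [MetricSpace β]
    [SecondCountableTopology β] [MeasurableSpace β] [BorelSpace β] [HasBesicovitchCovering β]
    (μ : Measure β) [IsLocallyFiniteMeasure μ] {S : Set β}
    (h : ∀ x ∈ S,
      ¬Tendsto (fun r => μ (S ∩ closedBall x r) / μ (closedBall x r)) (𝓝[>] 0) (𝓝 1)) :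
    μ S = 0 := by
  rw [← Measure.restrict_apply_self μ S]
  exact measure_mono_null h (ae_iff.1 (Besicovitch.ae_tendsto_measure_inter_div μ S))

theorem HasFDerivAt.exists_isOpen_forall_add_smul_ne_zero {E : Type*} [NormedAddCommGroup E]
    [NormedSpace ℝ E] {f : E → ℝ} {b : E →L[ℝ] ℝ} {x : E} (hf : HasFDerivAt f b x) (hb : b ≠ 0)
    (hfx : f x = 0) :
    ∃ D : Set E, IsOpen D ∧ D.Nonempty ∧ D ⊆ closedBall 0 1 ∧
      ∀ᶠ r in 𝓝[>] (0 : ℝ), ∀ z ∈ D, f (x + r • z) ≠ 0 := by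
  have hb' : 0 < ‖b‖ := norm_pos_iff.2 hb
  -- on this cone the linear part `b` of `f` beats the `o(‖z‖)` remainder
  refine ⟨{z | ‖b‖ / 2 * ‖z‖ < b z} ∩ ball 0 1,
    (isOpen_lt (by fun_prop) b.continuous).inter isOpen_ball, ?_,
    inter_subset_right.trans ball_subset_closedBall, ?_⟩
  · obtain ⟨z, hz1, hbz⟩ := b.exists_lt_apply_of_lt_opNorm (half_lt_self hb')
    have hz : ‖b‖ / 2 * ‖z‖ ≤ ‖b‖ / 2 := mul_le_of_le_one_right (by positivity) hz1.le
    rcases le_or_gt 0 (b z) with h | h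
    · rw [Real.norm_of_nonneg h] at hbz
      exact ⟨z, show _ < b z by linarith, mem_ball_zero_iff.2 hz1⟩
    · rw [Real.norm_eq_abs, _root_.abs_of_neg h] at hbz
      refine ⟨-z, show ‖b‖ / 2 * ‖-z‖ < b (-z) by rw [norm_neg, map_neg]; linarith, ?_⟩
      simpa using hz1
  · obtain ⟨δ, hδ, hball⟩ := Metric.eventually_nhds_iff.1 (hf.isLittleO.def (half_pos hb'))
    filter_upwards [Ioo_mem_nhdsGT hδ] with r ⟨hr0, hrδ⟩ z ⟨hzC, hz1⟩ h0
    have hz1 : ‖z‖ < 1 := mem_ball_zero_iff.1 hz1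
    have hdist : dist (x + r • z) x < δ := by
      rw [dist_eq_norm, add_sub_cancel_left, norm_smul, Real.norm_of_nonneg hr0.le]
      nlinarith [norm_nonneg z]
    have hest := hball hdist
    rw [hfx, h0, add_sub_cancel_left, map_smul, smul_eq_mul, norm_smul,
      Real.norm_of_nonneg hr0.le, sub_zero, zero_sub, norm_neg, Real.norm_eq_abs] at hest
    have hzC : ‖b‖ / 2 * ‖z‖ < b z := hzC
    nlinarith [mul_lt_mul_of_pos_left hzC hr0, le_abs_self (r * b z)]

section Density

variable {E : Type*} [NormedAddCommGroup E] [NormedSpace ℝ E] [FiniteDimensional ℝ E]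
  [MeasurableSpace E] [BorelSpace E] (μ : Measure E) [μ.IsAddHaarMeasure]

theorem not_tendsto_density_of_eventually_avoids {S D : Set E} {x : E} (hD : IsOpen D)
    (hDne : D.Nonempty) (hD1 : D ⊆ closedBall 0 1)
    (havoid : ∀ᶠ r in 𝓝[>] (0 : ℝ), ∀ z ∈ D, x + r • z ∉ S) :
    ¬Tendsto (fun r => μ (S ∩ closedBall x r) / μ (closedBall x r)) (𝓝[>] 0) (𝓝 1) := by
  set B := μ (closedBall (0 : E) 1)
  have hB0 : B ≠ 0 := (measure_closedBall_pos μ _ one_pos).ne'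
  have hBtop : B ≠ ∞ := measure_closedBall_lt_top.ne
  have hc : (B - μ D) / B < 1 := by
    rw [ENNReal.div_lt_iff (Or.inl hB0) (Or.inl hBtop), one_mul]
    exact ENNReal.sub_lt_self hBtop hB0 (hD.measure_pos μ hDne).ne'
  have hbound : ∀ᶠ r in 𝓝[>] (0 : ℝ),
      μ (S ∩ closedBall x r) / μ (closedBall x r) ≤ (B - μ D) / B := by
    filter_upwards [havoid, self_mem_nhdsWithin] with r hr (hr0 : 0 < r)
    set T := x +ᵥ r • D
    have hT : T ⊆ closedBall x r := by
      rintro _ ⟨_, ⟨w, hw, rfl⟩, rfl⟩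
      have hw1 : ‖w‖ ≤ 1 := mem_closedBall_zero_iff.1 (hD1 hw)
      rw [mem_closedBall, dist_eq_norm]
      show ‖x + r • w - x‖ ≤ r
      rw [add_sub_cancel_left, norm_smul, Real.norm_of_nonneg hr0.le]
      nlinarith
    have hST : S ∩ closedBall x r ⊆ closedBall x r \ T := by
      rintro z ⟨hzS, hz⟩
      refine ⟨hz, ?_⟩
      rintro ⟨_, ⟨w, hw, rfl⟩, rfl⟩
      exact hr w hw hzS
    have hμball := Measure.addHaar_closedBall' μ x hr0.le
    have hμT : μ T = ENNReal.ofReal (r ^ finrank ℝ E) * μ D := by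
      rw [measure_vadd, Measure.addHaar_smul_of_nonneg μ hr0.le]
    have hball_ne : μ (closedBall x r) ≠ ∞ := measure_closedBall_lt_top.ne
    rw [ENNReal.div_le_iff (measure_closedBall_pos μ x hr0).ne' hball_ne]
    calc μ (S ∩ closedBall x r) ≤ μ (closedBall x r \ T) := measure_mono hST
      _ = μ (closedBall x r) - μ T :=
        measure_sdiff hT ((hD.smul₀ hr0.ne').vadd x).measurableSet.nullMeasurableSet
          (ne_top_of_le_ne_top hball_ne (measure_mono hT))
      _ = ENNReal.ofReal (r ^ finrank ℝ E) * (B - μ D) := by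
        rw [hμball, hμT, ENNReal.mul_sub fun _ _ => ENNReal.ofReal_ne_top]
      _ = (B - μ D) / B * μ (closedBall x r) := by
        rw [hμball, mul_left_comm, ENNReal.div_mul_cancel hB0 hBtop]
  intro htend
  obtain ⟨r, h1, h2⟩ := ((htend.eventually (eventually_gt_nhds hc)).and hbound).exists
  exact h2.not_gt h1

theorem addHaar_setOf_eq_zero_fderiv_ne_zero (f : E → ℝ) :
    μ {x | f x = 0 ∧ DifferentiableAt ℝ f x ∧ fderiv ℝ f x ≠ 0} = 0 := by
  refine measure_eq_zero_of_forall_not_tendsto_density μ ?_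
  rintro x ⟨hfx, hd, hne⟩
  obtain ⟨D, hD, hDne, hD1, havoid⟩ :=
    hd.hasFDerivAt.exists_isOpen_forall_add_smul_ne_zero hne hfx
  exact not_tendsto_density_of_eventually_avoids μ hD hDne hD1
    (havoid.mono fun r hr z hz hS => hr z hz hS.1)

end Density

theorem measurable_fderiv_apply_of_forall_measurable {α : Type*} [MeasurableSpace α]
    {E : Type*} [NormedAddCommGroup E] [NormedSpace ℝ E] {f : α → E → ℝ} {x : E}
    (hf : ∀ z, Measurable fun a => f a z) (hd : ∀ a, DifferentiableAt ℝ (f a) x) (v : E) :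
    Measurable fun a => fderiv ℝ (f a) x v := by
  refine measurable_of_tendsto_metrizable
    (f := fun (n : ℕ) a => ((n : ℝ) + 1) • (f a (x + ((n : ℝ) + 1)⁻¹ • v) - f a x))
    (fun n => ?_) (tendsto_pi_nhds.2 fun a => ?_)
  · have := hf (x + ((n : ℝ) + 1)⁻¹ • v)
    have := hf x
    fun_prop
  · exact (hd a).hasFDerivAt.lim v <| tendsto_norm_atTop_atTop.comp <|
      tendsto_natCast_atTop_atTop.atTop_add tendsto_const_nhds

theorem measurable_gradient_of_forall_measurable {α : Type*} [MeasurableSpace α]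
    {E : Type*} [NormedAddCommGroup E] [InnerProductSpace ℝ E] [FiniteDimensional ℝ E]
    [MeasurableSpace E] [BorelSpace E] {f : α → E → ℝ} {x : E}
    (hf : ∀ z, Measurable fun a => f a z) (hd : ∀ a, DifferentiableAt ℝ (f a) x) :
    Measurable fun a => gradient (f a) x := by
  let e := stdOrthonormalBasis ℝ E
  have hrepr : (fun a => gradient (f a) x) = fun a => ∑ i, fderiv ℝ (f a) x (e i) • e i := by
    ext1 a
    conv_lhs => rw [← e.sum_repr' (gradient (f a) x)]
    simp_rw [real_inner_comm, gradient, InnerProductSpace.toDual_symm_apply]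
  rw [hrepr]
  exact Finset.measurable_sum _ fun i _ =>
    (measurable_fderiv_apply_of_forall_measurable hf hd (e i)).smul_const _

theorem DifferentiableAt.of_log {E : Type*} [NormedAddCommGroup E] [NormedSpace ℝ E] {q : E → ℝ}
    {x : E} (hq : ∀ y, 0 ≤ q y)
    (hd : DifferentiableAt ℝ (fun y => Real.log (q y)) x) (hx : Real.log (q x) ≠ 0) :
    DifferentiableAt ℝ q x := by
  refine ((differentiable_exp _).comp x hd).congr_of_eventuallyEq ?_
  filter_upwards [hd.continuousAt.eventually_ne hx] with y hy
  have hqy : q y ≠ 0 := fun h => hy (by rw [h, log_zero])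
  exact (exp_log ((hq y).lt_of_ne' hqy)).symm

section LogGradient

variable {E : Type*} [NormedAddCommGroup E] [InnerProductSpace ℝ E] [CompleteSpace E]
  {q : E → ℝ} {x : E}

theorem gradient_log_apply (hq : DifferentiableAt ℝ q x) (hx : q x ≠ 0) :
    gradient (fun y => log (q y)) x = (q x)⁻¹ • gradient q x := by
  rw [gradient, gradient, (hq.hasFDerivAt.log hx).fderiv, map_smul]

/-- Off the null set of `addHaar_setOf_eq_zero_fderiv_ne_zero`, either `q` is differentiable at
`x` with `q x > 0`, or both sides vanish. -/
theorem gradient_eq_smul_gradient_log (hq : ∀ y, 0 ≤ q y)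
    (hx : ¬(log (q x) = 0 ∧ DifferentiableAt ℝ (fun y => log (q y)) x ∧
      fderiv ℝ (fun y => log (q y)) x ≠ 0)) :
    gradient q x = q x • gradient (fun y => log (q y)) x := by
  rcases (hq x).eq_or_lt with hq0 | hpos
  · have hmin : IsLocalMin q x := Eventually.of_forall fun y => hq0 ▸ hq y
    rw [gradient, hmin.fderiv_eq_zero, ← hq0, zero_smul, map_zero]
  by_cases hdq : DifferentiableAt ℝ q x
  · rw [gradient_log_apply hdq hpos.ne', smul_inv_smul₀ hpos.ne']
  rw [gradient_eq_zero_of_not_differentiableAt hdq]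
  by_cases hdl : DifferentiableAt ℝ (fun y => log (q y)) x
  · have hzero : fderiv ℝ (fun y => log (q y)) x = 0 := by
      by_contra hne
      exact hdq (hdl.of_log hq fun h0 => hx ⟨h0, hdl, hne⟩)
    rw [gradient, hzero, map_zero, smul_zero]
  · rw [gradient_eq_zero_of_not_differentiableAt hdl, smul_zero]

end LogGradient

section WeightedPythagoras

variable {α : Type*} [MeasurableSpace α] {μ : Measure α} {E : Type*} [NormedAddCommGroup E]
  {w : α → ℝ} {g : α → E}

theorem integrable_of_integrable_norm_sub_sq_mul {a b : E} (hab : a ≠ b) (hw : ∀ t, 0 ≤ w t)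
    (hwm : AEStronglyMeasurable w μ) (ha : Integrable (fun t => ‖g t - a‖ ^ 2 * w t) μ)
    (hb : Integrable (fun t => ‖g t - b‖ ^ 2 * w t) μ) : Integrable w μ := by
  have hc : 0 < ‖a - b‖ ^ 2 := pow_pos (norm_pos_iff.2 (sub_ne_zero.2 hab)) 2
  refine ((ha.add hb).const_mul (2 / ‖a - b‖ ^ 2)).mono' hwm (Eventually.of_forall fun t => ?_)
  have htri := norm_sub_le_norm_sub_add_norm_sub a (g t) b
  rw [norm_sub_rev a (g t)] at htri
  have hsq : ‖a - b‖ ^ 2 ≤ 2 * ‖g t - a‖ ^ 2 + 2 * ‖g t - b‖ ^ 2 := by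
    nlinarith [norm_nonneg (a - b), sq_nonneg (‖g t - a‖ - ‖g t - b‖)]
  rw [Real.norm_of_nonneg (hw t), Pi.add_apply, div_mul_eq_mul_div, le_div_iff₀ hc]
  nlinarith [mul_le_mul_of_nonneg_right hsq (hw t)]

theorem integrable_smul_of_integrable_norm_sub_sq_mul [NormedSpace ℝ E] {b : E}
    (hw : ∀ t, 0 ≤ w t) (hwi : Integrable w μ) (hwg : AEStronglyMeasurable (fun t => w t • g t) μ)
    (hb : Integrable (fun t => ‖g t - b‖ ^ 2 * w t) μ) :
    Integrable (fun t => w t • g t) μ := by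
  refine ((hwi.const_mul (1 / 2 + ‖b‖)).add (hb.const_mul (1 / 2))).mono' hwg
    (Eventually.of_forall fun t => ?_)
  rw [norm_smul, Real.norm_of_nonneg (hw t), Pi.add_apply]
  nlinarith [hw t, norm_sub_norm_le (g t) b, sq_nonneg (‖g t - b‖ - 1),
    mul_nonneg (hw t) (sq_nonneg (‖g t - b‖ - 1))]

/-- The parallel axis theorem. -/
theorem integral_norm_sub_sq_mul_eq_add [InnerProductSpace ℝ E] [CompleteSpace E] (a : E)
    {b : E} (hwi : Integrable w μ) (hwg : Integrable (fun t => w t • g t) μ)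
    (hb : Integrable (fun t => ‖g t - b‖ ^ 2 * w t) μ)
    (hmean : ∫ t, w t • g t ∂μ = (∫ t, w t ∂μ) • b) :
    ∫ t, ‖g t - a‖ ^ 2 * w t ∂μ =
      ∫ t, ‖g t - b‖ ^ 2 * w t ∂μ + ‖b - a‖ ^ 2 * ∫ t, w t ∂μ := by
  set h := fun t => w t • g t - w t • b
  have hh : Integrable h μ := hwg.sub (hwi.smul_const b)
  have hh0 : ∫ t, h t ∂μ = 0 := by
    rw [integral_sub hwg (hwi.smul_const b), integral_smul_const, hmean, sub_self]
  have hpt : ∀ t, ‖g t - a‖ ^ 2 * w t =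
      ‖g t - b‖ ^ 2 * w t + (2 * ⟪b - a, h t⟫ + ‖b - a‖ ^ 2 * w t) := by
    intro t
    simp only [h, ← smul_sub, inner_smul_right]
    rw [show g t - a = (g t - b) + (b - a) by abel, norm_add_sq_real, real_inner_comm]
    ring
  have hcross : Integrable (fun t => 2 * ⟪b - a, h t⟫) μ := (hh.const_inner (b - a)).const_mul 2
  have hrest : Integrable (fun t => 2 * ⟪b - a, h t⟫ + ‖b - a‖ ^ 2 * w t) μ :=
    hcross.add (hwi.const_mul _)
  simp_rw [hpt]
  rw [integral_add hb hrest, integral_add hcross (hwi.const_mul _),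
    integral_const_mul, integral_const_mul, integral_inner hh, hh0, inner_zero_right]
  ring

end WeightedPythagoras

theorem integral_norm_gradient_log_sub_sq_mul_eq_add {α : Type*} [MeasurableSpace α]
    {μ : Measure α} {E : Type*} [NormedAddCommGroup E] [InnerProductSpace ℝ E]
    [FiniteDimensional ℝ E] [MeasurableSpace E] [BorelSpace E] {k : E → α → ℝ} {ρ : α → ℝ}
    {x : E} (a : E) {b : E} (hk_meas : ∀ z, Measurable (k z)) (hk_pos : ∀ t, 0 < k x t)
    (hk_diff : ∀ t, DifferentiableAt ℝ (fun y => k y t) x) (hρ_meas : Measurable ρ)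
    (hρ : ∀ t, 0 ≤ ρ t)
    (hmean : ∫ t, ρ t • gradient (fun y => k y t) x ∂μ = (∫ t, k x t * ρ t ∂μ) • b)
    (ha : Integrable (fun t => ‖gradient (fun y => log (k y t)) x - a‖ ^ 2 * (k x t * ρ t)) μ)
    (hb : Integrable (fun t => ‖gradient (fun y => log (k y t)) x - b‖ ^ 2 * (k x t * ρ t)) μ) :
    ∫ t, ‖gradient (fun y => log (k y t)) x - a‖ ^ 2 * (k x t * ρ t) ∂μ =
      ∫ t, ‖gradient (fun y => log (k y t)) x - b‖ ^ 2 * (k x t * ρ t) ∂μ +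
        ‖b - a‖ ^ 2 * ∫ t, k x t * ρ t ∂μ := by
  obtain rfl | hab := eq_or_ne a b
  · simp
  have hw : ∀ t, 0 ≤ k x t * ρ t := fun t => mul_nonneg (hk_pos t).le (hρ t)
  have hwm : Measurable fun t => k x t * ρ t := (hk_meas x).mul hρ_meas
  have hgm : Measurable fun t => gradient (fun y => log (k y t)) x :=
    measurable_gradient_of_forall_measurable (fun z => (hk_meas z).log)
      fun t => (hk_diff t).log (hk_pos t).ne'
  have hwg : ∀ t, (k x t * ρ t) • gradient (fun y => log (k y t)) x =
      ρ t • gradient (fun y => k y t) x := fun t => by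
    rw [gradient_log_apply (hk_diff t) (hk_pos t).ne', smul_smul,
      mul_right_comm, mul_inv_cancel₀ (hk_pos t).ne', one_mul]
  have hwi := integrable_of_integrable_norm_sub_sq_mul hab hw hwm.aestronglyMeasurable ha hb
  refine integral_norm_sub_sq_mul_eq_add a hwi
    (integrable_smul_of_integrable_norm_sub_sq_mul hw hwi (hwm.smul hgm).aestronglyMeasurable hb)
    hb ?_
  simpa only [hwg] using hmean

theorem conditional_denoising_pythagorean_general
    (d m : ℕ)
    (p0 : EuclideanSpace ℝ (Fin d) → EuclideanSpace ℝ (Fin m) → ℝ)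
    (hp0_meas : Measurable (Function.uncurry p0))
    (hp0_pos : ∀ x0 y, 0 < p0 x0 y)
    (k : EuclideanSpace ℝ (Fin d) → EuclideanSpace ℝ (Fin d) → ℝ)
    (hk_meas : Measurable (Function.uncurry k))
    (hk_pos : ∀ x x0, 0 < k x x0)
    (hk_diff : ∀ x0, Differentiable ℝ (fun x => k x x0))
    (p : EuclideanSpace ℝ (Fin d) → EuclideanSpace ℝ (Fin m) → ℝ)
    (hp_def : ∀ x y, p x y = ∫ x0, k x x0 * p0 x0 y)
    (hp_grad : ∀ x y, gradient (fun x' => p x' y) x =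
      ∫ x0, p0 x0 y • gradient (fun x' => k x' x0) x)
    (sstar : EuclideanSpace ℝ (Fin d) → EuclideanSpace ℝ (Fin m) → EuclideanSpace ℝ (Fin d))
    (hsstar : ∀ x y, sstar x y = gradient (fun x' => Real.log (p x' y)) x)
    (s : EuclideanSpace ℝ (Fin d) → EuclideanSpace ℝ (Fin m) → EuclideanSpace ℝ (Fin d))
    (hint1 : ∀ r : EuclideanSpace ℝ (Fin d) → EuclideanSpace ℝ (Fin m) → EuclideanSpace ℝ (Fin d),
      r = s ∨ r = sstar → ∀ y x, Integrable (fun x0 =>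
        ‖gradient (fun x' => Real.log (k x' x0)) x - r x y‖ ^ 2 * (k x x0 * p0 x0 y)))
    (hint2 : ∀ r : EuclideanSpace ℝ (Fin d) → EuclideanSpace ℝ (Fin m) → EuclideanSpace ℝ (Fin d),
      r = s ∨ r = sstar → ∀ y, Integrable (fun x => ∫ x0,
        ‖gradient (fun x' => Real.log (k x' x0)) x - r x y‖ ^ 2 * (k x x0 * p0 x0 y)))
    (hint3 : ∀ r : EuclideanSpace ℝ (Fin d) → EuclideanSpace ℝ (Fin m) → EuclideanSpace ℝ (Fin d),
      r = s ∨ r = sstar → Integrable (fun y => ∫ x, ∫ x0,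
        ‖gradient (fun x' => Real.log (k x' x0)) x - r x y‖ ^ 2 * (k x x0 * p0 x0 y)))
    (hint4 : ∀ y, Integrable (fun x => ‖sstar x y - s x y‖ ^ 2 * p x y))
    (hint5 : Integrable (fun y => ∫ x, ‖sstar x y - s x y‖ ^ 2 * p x y)) :
    (∫ y, ∫ x, ∫ x0,
        ‖gradient (fun x' => Real.log (k x' x0)) x - s x y‖ ^ 2 * (k x x0 * p0 x0 y)) =
      (∫ y, ∫ x, ∫ x0,
        ‖gradient (fun x' => Real.log (k x' x0)) x - sstar x y‖ ^ 2 * (k x x0 * p0 x0 y)) +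
      (∫ y, ∫ x, ‖sstar x y - s x y‖ ^ 2 * p x y) ∧
    (∫ y, ∫ x, ∫ x0,
        ‖gradient (fun x' => Real.log (k x' x0)) x - sstar x y‖ ^ 2 * (k x x0 * p0 x0 y)) ≤
      (∫ y, ∫ x, ∫ x0,
        ‖gradient (fun x' => Real.log (k x' x0)) x - s x y‖ ^ 2 * (k x x0 * p0 x0 y)) := by
  have hp_nonneg : ∀ x y, 0 ≤ p x y := fun x y =>
    (hp_def x y).symm ▸ integral_nonneg fun x0 => (mul_pos (hk_pos x x0) (hp0_pos x0 y)).le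
  have hgap : 0 ≤ ∫ y, ∫ x, ‖sstar x y - s x y‖ ^ 2 * p x y :=
    integral_nonneg fun y => integral_nonneg fun x => mul_nonneg (sq_nonneg _) (hp_nonneg x y)
  rw [and_iff_left_of_imp fun h => h ▸ le_add_of_nonneg_right hgap,
    ← integral_add (hint3 sstar (Or.inr rfl)) hint5]
  refine integral_congr_ae (.of_forall fun y => ?_)
  dsimp only
  have hregular := measure_eq_zero_iff_ae_notMem.1
    (addHaar_setOf_eq_zero_fderiv_ne_zero volume fun x => Real.log (p x y))
  rw [← integral_add (hint2 sstar (Or.inr rfl) y) (hint4 y)]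
  refine integral_congr_ae (hregular.mono fun x hx => ?_)
  dsimp only
  have hmean : ∫ x0, p0 x0 y • gradient (fun x' => k x' x0) x =
      (∫ x0, k x x0 * p0 x0 y) • sstar x y := by
    rw [← hp_grad, ← hp_def, hsstar, gradient_eq_smul_gradient_log (fun x' => hp_nonneg x' y) hx]
  rw [integral_norm_gradient_log_sub_sq_mul_eq_add (k := k) (ρ := (p0 · y)) (s x y)
    (fun _ => hk_meas.of_uncurry_left) (hk_pos x) (fun x0 => (hk_diff x0).differentiableAt)
    hp0_meas.of_uncurry_right (fun x0 => (hp0_pos x0 y).le) hmean (hint1 s (Or.inl rfl) y x)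
    (hint1 sstar (Or.inr rfl) y x), ← hp_def, mul_comm]

/-- **Pythagorean identity for the conditional denoising loss.** With
`p(x,y) = ∫ k(x,x₀) p₀(x₀,y) dx₀`, `s*(x,y) = ∇_x log p(x,y)`, and all
integrals finite, for every measurable `s`,
`∭ ‖∇_x log k − s‖² k p₀ = ∭ ‖∇_x log k − s*‖² k p₀ + ∬ ‖s* − s‖² p`;
in particular `s*` minimizes the denoising loss. -/
theorem conditional_denoising_pythagorean
    (d m : ℕ)
    (p0 : EuclideanSpace ℝ (Fin d) → EuclideanSpace ℝ (Fin m) → ℝ)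
    (hp0_meas : Measurable (Function.uncurry p0))
    (hp0_pos : ∀ x0 y, 0 < p0 x0 y)
    (hp0_prob : ∫ x0, ∫ y, p0 x0 y = 1)
    (k : EuclideanSpace ℝ (Fin d) → EuclideanSpace ℝ (Fin d) → ℝ)
    (hk_meas : Measurable (Function.uncurry k))
    (hk_pos : ∀ x x0, 0 < k x x0)
    (hk_prob : ∀ x0, ∫ x, k x x0 = 1)
    (hk_diff : ∀ x0, Differentiable ℝ (fun x => k x x0))
    (p : EuclideanSpace ℝ (Fin d) → EuclideanSpace ℝ (Fin m) → ℝ)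
    (hp_def : ∀ x y, p x y = ∫ x0, k x x0 * p0 x0 y)
    (hp_grad : ∀ x y, gradient (fun x' => p x' y) x =
      ∫ x0, p0 x0 y • gradient (fun x' => k x' x0) x)
    (sstar : EuclideanSpace ℝ (Fin d) → EuclideanSpace ℝ (Fin m) → EuclideanSpace ℝ (Fin d))
    (hsstar : ∀ x y, sstar x y = gradient (fun x' => Real.log (p x' y)) x)
    (s : EuclideanSpace ℝ (Fin d) → EuclideanSpace ℝ (Fin m) → EuclideanSpace ℝ (Fin d))
    (hs_meas : Measurable (Function.uncurry s))
    (hint1 : ∀ r : EuclideanSpace ℝ (Fin d) → EuclideanSpace ℝ (Fin m) → EuclideanSpace ℝ (Fin d),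
      r = s ∨ r = sstar → ∀ y x, Integrable (fun x0 =>
        ‖gradient (fun x' => Real.log (k x' x0)) x - r x y‖ ^ 2 * (k x x0 * p0 x0 y)))
    (hint2 : ∀ r : EuclideanSpace ℝ (Fin d) → EuclideanSpace ℝ (Fin m) → EuclideanSpace ℝ (Fin d),
      r = s ∨ r = sstar → ∀ y, Integrable (fun x => ∫ x0,
        ‖gradient (fun x' => Real.log (k x' x0)) x - r x y‖ ^ 2 * (k x x0 * p0 x0 y)))
    (hint3 : ∀ r : EuclideanSpace ℝ (Fin d) → EuclideanSpace ℝ (Fin m) → EuclideanSpace ℝ (Fin d),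
      r = s ∨ r = sstar → Integrable (fun y => ∫ x, ∫ x0,
        ‖gradient (fun x' => Real.log (k x' x0)) x - r x y‖ ^ 2 * (k x x0 * p0 x0 y)))
    (hint4 : ∀ y, Integrable (fun x => ‖sstar x y - s x y‖ ^ 2 * p x y))
    (hint5 : Integrable (fun y => ∫ x, ‖sstar x y - s x y‖ ^ 2 * p x y)) :
    (∫ y, ∫ x, ∫ x0,
        ‖gradient (fun x' => Real.log (k x' x0)) x - s x y‖ ^ 2 * (k x x0 * p0 x0 y)) =
      (∫ y, ∫ x, ∫ x0,
        ‖gradient (fun x' => Real.log (k x' x0)) x - sstar x y‖ ^ 2 * (k x x0 * p0 x0 y)) +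
      (∫ y, ∫ x, ‖sstar x y - s x y‖ ^ 2 * p x y) ∧
    (∫ y, ∫ x, ∫ x0,
        ‖gradient (fun x' => Real.log (k x' x0)) x - sstar x y‖ ^ 2 * (k x x0 * p0 x0 y)) ≤
      (∫ y, ∫ x, ∫ x0,
        ‖gradient (fun x' => Real.log (k x' x0)) x - s x y‖ ^ 2 * (k x x0 * p0 x0 y)) :=
  conditional_denoising_pythagorean_general d m p0 hp0_meas hp0_pos k hk_meas hk_pos hk_diff p
    hp_def hp_grad sstar hsstar s hint1 hint2 hint3 hint4 hint5
end

section
/- Let α : ℝ → ℝ be continuous with α ≥ 0, and for a ≤ b write ᾱ(a,b) = ∫_a^b α(z) dz. For a ≤ b and x₀ ∈ ℝ define the transition measure K_{a,b}(x₀) = gaussianReal (x₀ · exp(−ᾱ(a,b))) (1 − exp(−2ᾱ(a,b))), a Gaussian measure on ℝ. Then the family satisfies the Chapman–Kolmogorov (semigroup) consistency: for all τ ≤ s ≤ t and all x₀ ∈ ℝ, the convolution of the pushforward of K_{τ,s}(x₀) under the map y ↦ exp(−ᾱ(s,t)) · y with the Gaussian measure gaussianReal 0 (1 − exp(−2ᾱ(s,t)))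 equals K_{τ,t}(x₀). -/
/-!
Scaling a Gaussian by `c` scales its mean by `c` and its variance by `c ^ 2`, and convolving two
Gaussians adds means and variances. Since `ᾱ(τ,t) = ᾱ(τ,s) + ᾱ(s,t)`, the claim reduces to the
identities `e^{-A} e^{-B} = e^{-(A+B)}` and `e^{-2B} (1 - e^{-2A}) + (1 - e^{-2B}) = 1 - e^{-2(A+B)}`,
where nonnegativity of `A` and `B` keeps the variances clear of the truncation in `Real.toNNReal`.
-/

open MeasureTheory ProbabilityTheory Real

lemma one_sub_exp_neg_two_mul_nonneg {A : ℝ} (hA : 0 ≤ A) : 0 ≤ 1 - exp (-2 * A) := by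
  have : exp (-2 * A) ≤ 1 := exp_le_one_iff.mpr (by linarith)
  linarith

lemma exp_neg_sq_mul_one_sub_add_one_sub (A B : ℝ) :
    exp (-B) ^ 2 * (1 - exp (-2 * A)) + (1 - exp (-2 * B)) = 1 - exp (-2 * (A + B)) := by
  rw [← exp_nat_mul, mul_add, exp_add]
  push_cast
  ring_nf

theorem gaussianReal_map_exp_neg_mul_conv_gaussianReal (x₀ : ℝ) {A B : ℝ} (hA : 0 ≤ A)
    (hB : 0 ≤ B) :
    (gaussianReal (x₀ * exp (-A)) (1 - exp (-2 * A)).toNNReal).map (exp (-B) * ·)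
        ∗ gaussianReal 0 (1 - exp (-2 * B)).toNNReal
      = gaussianReal (x₀ * exp (-(A + B))) (1 - exp (-2 * (A + B))).toNNReal := by
  rw [gaussianReal_map_const_mul, gaussianReal_conv_gaussianReal]
  congr 1
  · rw [neg_add, exp_add]
    ring
  · ext
    rw [NNReal.coe_add, NNReal.coe_mul, NNReal.coe_mk,
      coe_toNNReal _ (one_sub_exp_neg_two_mul_nonneg hA),
      coe_toNNReal _ (one_sub_exp_neg_two_mul_nonneg hB),
      coe_toNNReal _ (one_sub_exp_neg_two_mul_nonneg (add_nonneg hA hB))]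
    exact exp_neg_sq_mul_one_sub_add_one_sub A B

/-- **Chapman–Kolmogorov consistency of the mean-reverting transition kernels.**
For continuous nonnegative `α`, `ᾱ(a,b) = ∫_a^b α(z) dz`, and transition
measures `K_{a,b}(x₀) = gaussianReal (x₀ e^{-ᾱ(a,b)}) (1 - e^{-2ᾱ(a,b)})`,
for all `τ ≤ s ≤ t` and `x₀`, the convolution of the pushforward of
`K_{τ,s}(x₀)` under `y ↦ e^{-ᾱ(s,t)} y` with `gaussianReal 0 (1 - e^{-2ᾱ(s,t)})`
equals `K_{τ,t}(x₀)`. -/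
theorem meanReverting_chapman_kolmogorov
    (α : ℝ → ℝ) (hα : Continuous α) (hα_nonneg : ∀ z, 0 ≤ α z)
    (K : ℝ → ℝ → ℝ → Measure ℝ)
    (hK : ∀ a b : ℝ, a ≤ b → ∀ x₀ : ℝ,
      K a b x₀ = gaussianReal (x₀ * Real.exp (-∫ z in a..b, α z))
        (Real.toNNReal (1 - Real.exp (-2 * ∫ z in a..b, α z)))) :
    ∀ τ s t : ℝ, τ ≤ s → s ≤ t → ∀ x₀ : ℝ,
      Measure.conv
        (Measure.map (fun y => Real.exp (-∫ z in s..t, α z) * y) (K τ s x₀))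
        (gaussianReal 0 (Real.toNNReal (1 - Real.exp (-2 * ∫ z in s..t, α z))))
        = K τ t x₀ := by
  intro τ s t hτs hst x₀
  have hadd : (∫ z in τ..s, α z) + ∫ z in s..t, α z = ∫ z in τ..t, α z :=
    intervalIntegral.integral_add_adjacent_intervals
      (hα.intervalIntegrable _ _) (hα.intervalIntegrable _ _)
  rw [hK τ s hτs x₀, hK τ t (hτs.trans hst) x₀, ← hadd]
  exact gaussianReal_map_exp_neg_mul_conv_gaussianReal x₀
    (intervalIntegral.integral_nonneg hτs fun z _ => hα_nonneg z)
    (intervalIntegral.integral_nonneg hst fun z _ => hα_nonneg z)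
end
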